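/- Let F(t) = 1/(1+e^{-t}) denote the logistic function. Fix n, d, m ∈ ℕ, labeled data x_1,…,x_n ∈ ℝ^d with responses y_1,…,y_n ∈ ℝ, a similarity threshold s > 0, guidance pairs given by vectors u_1, v_1, …, u_m, v_m ∈ ℝ^d, and regularization parameters λ₁ ≥ 0, λ₂ ≥ 0. Then the Similar-guidance objective J(w) = Σ_{i=1}^n (⟨x_i, w⟩ − y_i)² + λ₁‖w‖² − λ₂ Σ_{t=1}^m log( F(s − (⟨u_t, w⟩ − ⟨v_t, w⟩)) − F(−s − (⟨u_t, w⟩ − ⟨v_t, w⟩)) ) is a convex function of w on ℝ^d. -/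

import Mathlib

/-!
Writing `F (c - δ) = e^c / (e^c + e^δ)`, the probability that a logistic variable with location
`δ` falls in `(a, b)` is `e^δ (e^b - e^a) / ((e^b + e^δ) (e^a + e^δ))`. Its logarithm is
`δ + const - log (e^b + e^δ) - log (e^a + e^δ)`, and `t ↦ log (c + e^t)` is convex for `c ≥ 0`
(second derivative `c e^t / (c + e^t)^2`), so the guidance term is concave in `δ`, hence in `w`,
where `δ = ⟨u - v, w⟩` is linear. The squared residuals and `‖w‖²` are convex, and nonnegative
weights preserve all of this.
-/

open Set Real

section FinsetSum

variable {𝕜 E β ι : Type*} [Semiring 𝕜] [PartialOrder 𝕜] [AddCommMonoid E] [SMul 𝕜 E]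
  [AddCommMonoid β] [PartialOrder β] [IsOrderedAddMonoid β] [Module 𝕜 β]
  {s : Set E} {t : Finset ι} {f : ι → E → β}

theorem convexOn_finset_sum (hs : Convex 𝕜 s) (hf : ∀ i ∈ t, ConvexOn 𝕜 s (f i)) :
    ConvexOn 𝕜 s fun x => ∑ i ∈ t, f i x := by
  classical
  induction t using Finset.induction_on with
  | empty => simpa using convexOn_const (0 : β) hs
  | insert i t hi ih =>
    simp only [Finset.sum_insert hi]
    exact (hf i (t.mem_insert_self i)).add (ih fun j hj => hf j (Finset.mem_insert_of_mem hj))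

theorem concaveOn_finset_sum (hs : Convex 𝕜 s) (hf : ∀ i ∈ t, ConcaveOn 𝕜 s (f i)) :
    ConcaveOn 𝕜 s fun x => ∑ i ∈ t, f i x :=
  convexOn_finset_sum (β := βᵒᵈ) hs hf

end FinsetSum

noncomputable def logistic (t : ℝ) : ℝ := 1 / (1 + exp (-t))

theorem logistic_sub_logistic_eq (a b δ : ℝ) :
    logistic (b - δ) - logistic (a - δ) =
      exp δ * (exp b - exp a) / ((exp b + exp δ) * (exp a + exp δ)) := by
  have h (c : ℝ) : logistic (c - δ) = exp c / (exp c + exp δ) := by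
    rw [logistic, neg_sub, exp_sub]
    field_simp
  rw [h, h]
  field_simp
  ring

theorem log_logistic_sub_logistic_eq {a b : ℝ} (hab : a < b) (δ : ℝ) :
    log (logistic (b - δ) - logistic (a - δ)) =
      δ + log (exp b - exp a) - log (exp b + exp δ) - log (exp a + exp δ) := by
  have hba : 0 < exp b - exp a := sub_pos.2 (exp_lt_exp.2 hab)
  rw [logistic_sub_logistic_eq, log_div (by positivity) (by positivity),
    log_mul (by positivity) hba.ne', log_mul (by positivity) (by positivity), log_exp]
  ring

theorem convexOn_log_add_exp {c : ℝ} (hc : 0 ≤ c) :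
    ConvexOn ℝ univ fun t => log (c + exp t) := by
  have hpos (t : ℝ) : 0 < c + exp t := by positivity
  refine convexOn_of_hasDerivWithinAt2_nonneg convex_univ
    (f' := fun t => exp t / (c + exp t))
    (f'' := fun t => c * exp t / (c + exp t) ^ 2) ?_ (fun t _ => ?_) (fun t _ => ?_)
    (fun t _ => by positivity)
  · exact Continuous.continuousOn (by fun_prop (disch := exact fun t => (hpos t).ne'))
  · rw [interior_univ, hasDerivWithinAt_univ]
    simpa using ((hasDerivAt_exp t).const_add c).log (hpos t).ne'
  · rw [interior_univ, hasDerivWithinAt_univ]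
    refine ((hasDerivAt_exp t).div ((hasDerivAt_exp t).const_add c) (hpos t).ne').congr_deriv ?_
    ring

theorem concaveOn_log_logistic_sub_logistic {a b : ℝ} (hab : a < b) :
    ConcaveOn ℝ univ fun δ => log (logistic (b - δ) - logistic (a - δ)) := by
  simp_rw [log_logistic_sub_logistic_eq hab]
  exact (((concaveOn_id convex_univ).add (concaveOn_const _ convex_univ)).sub
    (convexOn_log_add_exp (exp_pos b).le)).sub (convexOn_log_add_exp (exp_pos a).le)

section InnerProductSpace

variable {E : Type*} [NormedAddCommGroup E] [InnerProductSpace ℝ E]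

theorem convexOn_inner_sub_sq (a : E) (c : ℝ) :
    ConvexOn ℝ univ fun w : E => (inner ℝ a w - c) ^ 2 := by
  simpa [Function.comp_def, sub_eq_add_neg] using
    ((Even.convexOn_pow (𝕜 := ℝ) even_two).translate_left (-c)).comp_linearMap (innerₛₗ ℝ a)

theorem convexOn_norm_sq : ConvexOn ℝ univ fun w : E => ‖w‖ ^ 2 :=
  convexOn_univ_norm.pow (fun w _ => norm_nonneg w) 2

end InnerProductSpace

/-- convexity of the Similar-guidance objective. -/
theorem similar_guidance_objective_convex
    (n d m : ℕ)
    (x : Fin n → EuclideanSpace ℝ (Fin d)) (y : Fin n → ℝ)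
    (u v : Fin m → EuclideanSpace ℝ (Fin d))
    (s : ℝ) (hs : 0 < s)
    (lam1 lam2 : ℝ) (hlam1 : 0 ≤ lam1) (hlam2 : 0 ≤ lam2)
    (F : ℝ → ℝ) (hF : ∀ t, F t = 1 / (1 + Real.exp (-t))) :
    ConvexOn ℝ Set.univ (fun w : EuclideanSpace ℝ (Fin d) =>
      (∑ i, ((inner ℝ (x i) w : ℝ) - y i) ^ 2) + lam1 * ‖w‖ ^ 2
        - lam2 * ∑ t, Real.log
            (F (s - ((inner ℝ (u t) w : ℝ) - (inner ℝ (v t) w : ℝ)))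
              - F (-s - ((inner ℝ (u t) w : ℝ) - (inner ℝ (v t) w : ℝ))))) := by
  obtain rfl : F = logistic := funext hF
  have hwindow : -s < s := by linarith
  have hresiduals := convexOn_finset_sum convex_univ fun i (_ : i ∈ Finset.univ) =>
    convexOn_inner_sub_sq (x i) (y i)
  have hguidance := concaveOn_finset_sum convex_univ fun t (_ : t ∈ Finset.univ) =>
    (concaveOn_log_logistic_sub_logistic hwindow).comp_linearMap (innerₛₗ ℝ (u t) - innerₛₗ ℝ (v t))
  exact (hresiduals.add (convexOn_norm_sq.smul hlam1)).sub (hguidance.smul hlam2)
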